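/- arXiv:1207.6301 — 2 statements merged into one kernel-verified Lean document; each statement's English description precedes it below -/
import Mathlib

section
/- Assume (A1) primitivity. Then there exist n ≥ 1, p ∈ 𝒫 and x ∈ ℝ^d with p + x ∈ ω^n(p) and p + x contained in the interior of supp(ω^n(p)). For any such n, p, x, the contraction y ↦ λ^{−n}y + x maps supp(ω^n(p)) into itself and has a unique fixed point y₀; the tile t = p + x − y₀ satisfies t ∈ ω^n(t) and contains 0 in its interior, and T = ∪_{k≥0} ω^{kn}(t) is a tiling belonging to Ω with ω^n(T) = T whose unique tile containing 0 is t. -/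
open Metric Set Pointwise

noncomputable section

/-- Points of `ℝ^d`. -/
abbrev Pt (d : ℕ) := EuclideanSpace ℝ (Fin d)

/-- A (possibly labelled) tile in `ℝ^d`: a subset of `ℝ^d` together with a label. -/
structure Tile (d : ℕ) where
  carrier : Set (Pt d)
  label : ℕ

instance {d : ℕ} : Inhabited (Tile d) := ⟨⟨∅, 0⟩⟩

/-- Translate of a tile by a vector. -/
def Tile.translate {d : ℕ} (t : Tile d) (x : Pt d) : Tile d :=
  ⟨(fun y => y + x) '' t.carrier, t.label⟩

/-- A tile proper: homeomorphic to the closed unit ball. -/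
def Tile.IsTile {d : ℕ} (t : Tile d) : Prop :=
  Nonempty (t.carrier ≃ₜ (Metric.closedBall (0 : Pt d) 1))

/-- Support of a partial tiling: the union of its tiles. -/
def psupp {d : ℕ} (P : Set (Tile d)) : Set (Pt d) := ⋃ t ∈ P, t.carrier

/-- `tilesAt P U` = the tiles of `P` meeting `U`, written `P(U)` in the paper. -/
def tilesAt {d : ℕ} (P : Set (Tile d)) (U : Set (Pt d)) : Set (Tile d) :=
  {t ∈ P | (t.carrier ∩ U).Nonempty}

/-- Translate of a collection of tiles. -/
def translateSet {d : ℕ} (P : Set (Tile d)) (x : Pt d) : Set (Tile d) :=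
  (fun t => t.translate x) '' P

/-- A partial tiling: tiles with pairwise disjoint interiors. -/
def IsPartialTiling {d : ℕ} (P : Set (Tile d)) : Prop :=
  (∀ t ∈ P, t.IsTile) ∧
  ∀ t ∈ P, ∀ t' ∈ P, t ≠ t' → interior t.carrier ∩ interior t'.carrier = ∅

/-- A patch: a finite partial tiling. -/
def IsPatch {d : ℕ} (P : Set (Tile d)) : Prop := IsPartialTiling P ∧ P.Finite

/-- A tiling of all of `ℝ^d`. -/
def IsTilingOfSpace {d : ℕ} (P : Set (Tile d)) : Prop :=
  IsPartialTiling P ∧ psupp P = univ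

/-- A substitution tiling system `(𝒫, ω)` with inflation constant `λ > 1`. -/
structure SubstSystem (d : ℕ) where
  proto : Set (Tile d)
  proto_finite : proto.Finite
  proto_nonempty : proto.Nonempty
  proto_isTile : ∀ p ∈ proto, p.IsTile
  proto_zero_mem : ∀ p ∈ proto, (0 : Pt d) ∈ interior p.carrier
  proto_no_translate : ∀ p ∈ proto, ∀ q ∈ proto, ∀ x : Pt d,
    q = p.translate x → p = q ∧ x = 0
  lam : ℝ
  one_lt_lam : 1 < lam
  sub : Tile d → Set (Tile d)
  sub_patch : ∀ p ∈ proto, IsPatch (sub p)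
  sub_proto : ∀ p ∈ proto, ∀ t ∈ sub p, ∃ q ∈ proto, ∃ x : Pt d, t = q.translate x
  sub_supp : ∀ p ∈ proto, psupp (sub p) = lam • p.carrier
  sub_translate : ∀ (t : Tile d) (x : Pt d),
    sub (t.translate x) = (fun s => s.translate (lam • x)) '' sub t

namespace SubstSystem

variable {d : ℕ} (S : SubstSystem d)

/-- Tile-wise application of the substitution to a collection of tiles. -/
def subSet (P : Set (Tile d)) : Set (Tile d) := ⋃ t ∈ P, S.sub t

/-- Iterated substitution `ω^n` on collections of tiles. -/
def subIter (n : ℕ) (P : Set (Tile d)) : Set (Tile d) := (S.subSet)^[n] P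

/-- `ω^n(t)` for a single tile `t`. -/
def omegan (n : ℕ) (t : Tile d) : Set (Tile d) := S.subIter n {t}

/-- The continuous hull `Ω`. -/
def Omega : Set (Set (Tile d)) :=
  {T | IsTilingOfSpace T ∧ ∀ P : Set (Tile d), P ⊆ T → IsPatch P →
    ∃ n : ℕ, ∃ p ∈ S.proto, ∃ x : Pt d, P ⊆ translateSet (S.omegan n p) x}

/-- `x` is the puncture of the tile `t`, i.e. `t = p + x` for a prototile `p`. -/
def IsPuncture (t : Tile d) (x : Pt d) : Prop :=
  ∃ p ∈ S.proto, t = p.translate x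

open Classical in
/-- The puncture `x(t)` of a tile `t` (chosen; unique for translates of prototiles). -/
def punc (t : Tile d) : Pt d :=
  if h : ∃ x : Pt d, S.IsPuncture t x then h.choose else 0

/-- The punctured hull (transversal) `Ω_punc`. -/
def OmegaPunc : Set (Set (Tile d)) :=
  {T ∈ S.Omega | ∃ t ∈ T, S.IsPuncture t 0}

end SubstSystem

/-- The tiling metric. -/
def tilingDist {d : ℕ} (T T' : Set (Tile d)) : ℝ :=
  sInf ({1} ∪ {ε : ℝ | 0 < ε ∧ ∃ x x' : Pt d, ‖x‖ < ε ∧ ‖x'‖ < ε ∧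
    tilesAt (translateSet T (-x)) (ball (0 : Pt d) (1 / ε)) =
      tilesAt (translateSet T' (-x')) (ball (0 : Pt d) (1 / ε))})

namespace SubstSystem

variable {d : ℕ} (S : SubstSystem d)

/-- Density of a family of tilings in `Ω_punc` w.r.t. the tiling metric. -/
def DenseInPunc (E : Set (Set (Tile d))) : Prop :=
  ∀ T ∈ S.OmegaPunc, ∀ ε : ℝ, 0 < ε → ∃ T' ∈ E, tilingDist T T' < ε

/-- Openness of a subset of `Ω_punc` w.r.t. the tiling metric (subspace topology). -/
def OpenInPunc (E : Set (Set (Tile d))) : Prop :=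
  E ⊆ S.OmegaPunc ∧ ∀ T ∈ E, ∃ ε : ℝ, 0 < ε ∧
    ∀ T' ∈ S.OmegaPunc, tilingDist T T' < ε → T' ∈ E

/-- The translational equivalence relation `R_punc` on `Ω_punc`. -/
def Rpunc : Set (Set (Tile d) × Set (Tile d)) :=
  {TT | TT.1 ∈ S.OmegaPunc ∧ TT.2 ∈ S.OmegaPunc ∧ ∃ x : Pt d, TT.2 = translateSet TT.1 x}

/-- `Punc(n, p)`: the punctures of the tiles of `ω^n(p)`. -/
def Punc (n : ℕ) (p : Tile d) : Set (Pt d) :=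
  {x | ∃ t ∈ S.omegan n p, S.IsPuncture t x}

/-- `E^n_p(x, y)`. -/
def Eset (n : ℕ) (p : Tile d) (x y : Pt d) : Set (Set (Tile d) × Set (Tile d)) :=
  {TT | ∃ T ∈ S.OmegaPunc, p ∈ T ∧
    TT.1 = translateSet (S.subIter n T) (-x) ∧ TT.2 = translateSet (S.subIter n T) (-y)}

/-- `R_n`. -/
def Rn (n : ℕ) : Set (Set (Tile d) × Set (Tile d)) :=
  ⋃ p ∈ S.proto, ⋃ x ∈ S.Punc n p, ⋃ y ∈ S.Punc n p, S.Eset n p x y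

/-- `R_AF = ∪ₙ R_n`. -/
def RAF : Set (Set (Tile d) × Set (Tile d)) := ⋃ n : ℕ, S.Rn n

/-- `U(P, t)`. -/
def Uset (P : Set (Tile d)) (t : Tile d) : Set (Set (Tile d)) :=
  {T ∈ S.OmegaPunc | translateSet P (-(S.punc t)) ⊆ T}

/-- `V(P, t₁, t₂)`. -/
def Vset (P : Set (Tile d)) (t₁ t₂ : Tile d) : Set (Set (Tile d) × Set (Tile d)) :=
  {TT | TT.1 ∈ S.Uset P t₁ ∧ TT.2 = translateSet TT.1 (S.punc t₁ - S.punc t₂)}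

/-- (A1) primitivity. -/
def Primitive : Prop :=
  ∃ N : ℕ, ∀ p ∈ S.proto, ∀ q ∈ S.proto, ∃ x : Pt d, Tile.translate q x ∈ S.omegan N p

/-- (A2) finite local complexity. -/
def FLC : Prop :=
  ∀ R : ℝ, 0 < R → ∃ Ps : Set (Set (Tile d)), Ps.Finite ∧
    ∀ P : Set (Tile d), IsPatch P → Metric.diam (psupp P) < R →
      (∃ T ∈ S.Omega, P ⊆ T) → ∃ P₀ ∈ Ps, ∃ x : Pt d, P = translateSet P₀ x

/-- (A3) `ω : Ω → Ω` is bijective. -/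
def SubBijective : Prop := Set.BijOn S.subSet S.Omega S.Omega

/-- (A4) `ω` forces its border. -/
def ForcesBorder : Prop :=
  ∃ n : ℕ, ∀ p ∈ S.proto, ∀ T ∈ S.Omega, ∀ T' ∈ S.Omega, ∀ x x' : Pt d,
    translateSet (S.omegan n p) x ⊆ T → translateSet (S.omegan n p) x' ⊆ T' →
    translateSet (tilesAt T ((fun y => y + x) '' psupp (S.omegan n p))) (-x) =
      translateSet (tilesAt T' ((fun y => y + x') '' psupp (S.omegan n p))) (-x')

/-- Prototile boundaries have box-counting dimension strictly less than `d`. -/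
def SmallBoundary : Prop :=
  ∃ c : ℝ, c < d ∧ ∃ K₀ : ℝ, ∀ p ∈ S.proto, ∀ ε : ℝ, 0 < ε →
    ∃ centers : Finset (Pt d), (centers.card : ℝ) ≤ K₀ * ε ^ (-c) ∧
      frontier p.carrier ⊆ ⋃ z ∈ centers, ball z ε

end SubstSystem

/-- A symmetry group action for `(𝒫, ω)`: `G ≤ O(d, ℝ)` acting on tiles, preserving
the prototile set and commuting with the substitution. -/
structure SymmAction {d : ℕ} (S : SubstSystem d) (G : Subgroup (Pt d ≃ₗᵢ[ℝ] Pt d)) where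
  act : G → Tile d → Tile d
  act_carrier : ∀ (g : G) (t : Tile d),
    (act g t).carrier = (g : Pt d ≃ₗᵢ[ℝ] Pt d) '' t.carrier
  act_one : ∀ t : Tile d, act 1 t = t
  act_mul : ∀ (g h : G) (t : Tile d), act (g * h) t = act g (act h t)
  act_proto : ∀ (g : G), ∀ p ∈ S.proto, act g p ∈ S.proto
  act_translate : ∀ (g : G) (t : Tile d) (x : Pt d),
    act g (t.translate x) = (act g t).translate ((g : Pt d ≃ₗᵢ[ℝ] Pt d) x)
  act_sub : ∀ (g : G), ∀ p ∈ S.proto, S.sub (act g p) = act g '' S.sub p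

/-- Action of a group element on a (partial) tiling: `gT = {gt : t ∈ T}`. -/
def SymmAction.actSet {d : ℕ} {S : SubstSystem d} {G : Subgroup (Pt d ≃ₗᵢ[ℝ] Pt d)}
    (σ : SymmAction S G) (g : G) (T : Set (Tile d)) : Set (Tile d) := σ.act g '' T

/-- `G` acts freely on the prototile set. -/
def SymmAction.FreeOnProto {d : ℕ} {S : SubstSystem d} {G : Subgroup (Pt d ≃ₗᵢ[ℝ] Pt d)}
    (σ : SymmAction S G) : Prop := ∀ g : G, ∀ p ∈ S.proto, σ.act g p = p → g = 1

/-- Composition of relations. -/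
def relComp {α : Type*} (R₁ R₂ : Set (α × α)) : Set (α × α) :=
  {q | ∃ z : α, (q.1, z) ∈ R₁ ∧ (z, q.2) ∈ R₂}

/-- Transpose (inverse) of a relation. -/
def relTrans {α : Type*} (R : Set (α × α)) : Set (α × α) := {q | (q.2, q.1) ∈ R}

end

/-! Primitivity puts a translate `p + x` of a prototile deep inside `ωⁿ(p)`: the tile of `ω^m(p)`
at the origin is small compared with `λ^m p`, and `ω^N` of it contains a copy of `p`. The
contraction `y ↦ λ⁻ⁿ y + x` maps `λⁿ p` onto `p + x`; moving its fixed point `y₀` to the origin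
gives a tile `t = p + x - y₀` with `t ∈ ωⁿ(t)` and `t ⊆ int (λⁿ t)`, so `0 ∈ int t`. The patches
`ω^{kn}(t)` then increase, their supports `λ^{kn} t` exhaust `ℝ^d`, and their union is an
`ωⁿ`-invariant tiling in `Ω`. Its only tile containing `0` is `t`, because tiles are closures of
their interiors. -/

open Filter Topology

theorem existsUnique_smul_add_eq {K E : Type*} [Field K] [AddCommGroup E] [Module K E] {c : K}
    (hc : c ≠ 1) (x : E) : ∃! y : E, c • y + x = y := by
  have key (y : E) : c • y + x = y ↔ y = (1 - c)⁻¹ • x := by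
    rw [eq_inv_smul_iff₀ (sub_ne_zero.2 hc.symm), sub_smul, one_smul, sub_eq_iff_eq_add']
    exact eq_comm
  exact ⟨_, (key _).2 rfl, fun y hy => (key y).1 hy⟩

theorem zero_mem_interior_of_subset_interior_smul {E : Type*} [NormedAddCommGroup E]
    [NormedSpace ℝ E] {K : Set E} (hK : IsClosed K) (hne : K.Nonempty) {c : ℝ} (hc : 1 < c)
    (h : K ⊆ interior (c • K)) : (0 : E) ∈ interior K := by
  have hc0 : c ≠ 0 := (one_pos.trans hc).ne'
  have hmaps : MapsTo (c⁻¹ • ·) K (interior K) := fun y hy => by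
    have := smul_mem_smul_set (a := c⁻¹) (h hy)
    rwa [← interior_smul₀ (inv_ne_zero hc0), smul_smul, inv_mul_cancel₀ hc0, one_smul] at this
  obtain ⟨z, hz⟩ := hne
  have hlim : Tendsto (fun j : ℕ => c⁻¹ ^ j • z) atTop (𝓝 0) := by
    simpa using (tendsto_pow_atTop_nhds_zero_of_lt_one (inv_nonneg.2 (one_pos.trans hc).le)
      (inv_lt_one_of_one_lt₀ hc)).smul_const z
  have h0 : (0 : E) ∈ K := hK.mem_of_tendsto hlim <| Eventually.of_forall fun j => by
    simpa only [smul_iterate_apply] using (hmaps.mono_right interior_subset).iterate j hz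
  simpa using hmaps h0

variable {d : ℕ}

namespace Tile

theorem translate_carrier (t : Tile d) (x : Pt d) :
    (t.translate x).carrier = (· + x) '' t.carrier := rfl

theorem translate_translate (t : Tile d) (a b : Pt d) :
    (t.translate a).translate b = t.translate (a + b) := by
  simp only [Tile.translate, image_image, add_assoc]

theorem translate_zero (t : Tile d) : t.translate 0 = t := by
  simp [Tile.translate]

theorem IsTile.translate {t : Tile d} (ht : t.IsTile) (x : Pt d) : (t.translate x).IsTile :=
  let ⟨e⟩ := ht
  ⟨((Homeomorph.addRight x).image t.carrier).symm.trans e⟩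

theorem IsTile.isCompact {t : Tile d} (ht : t.IsTile) : IsCompact t.carrier := by
  obtain ⟨e⟩ := ht
  have : CompactSpace (closedBall (0 : Pt d) 1) :=
    isCompact_iff_compactSpace.1 (isCompact_closedBall _ _)
  exact isCompact_iff_compactSpace.2 e.symm.compactSpace

end Tile

theorem interior_image_add_right (A : Set (Pt d)) (x : Pt d) :
    interior ((· + x) '' A) = (· + x) '' interior A :=
  ((Homeomorph.addRight x).image_interior A).symm

theorem smul_image_add_right (c : ℝ) (A : Set (Pt d)) (x : Pt d) :
    c • ((· + x) '' A) = (· + c • x) '' (c • A) := by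
  simp only [← image_smul, image_image, smul_add]

section PartialTiling

variable {P : Set (Tile d)}

theorem mem_psupp {z : Pt d} : z ∈ psupp P ↔ ∃ t ∈ P, z ∈ t.carrier := by
  simp [psupp]

theorem subset_psupp {t : Tile d} (ht : t ∈ P) : t.carrier ⊆ psupp P :=
  subset_biUnion_of_mem (u := Tile.carrier) ht

theorem psupp_biUnion {ι : Type*} (I : Set ι) (Q : ι → Set (Tile d)) :
    psupp (⋃ i ∈ I, Q i) = ⋃ i ∈ I, psupp (Q i) := by
  ext z
  simp only [mem_psupp, mem_iUnion]
  grind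

theorem psupp_translateSet (x : Pt d) : psupp (translateSet P x) = (· + x) '' psupp P := by
  simp only [psupp, translateSet, biUnion_image, image_iUnion₂, Tile.translate_carrier]

theorem isPartialTiling_iff :
    IsPartialTiling P ↔ (∀ t ∈ P, t.IsTile) ∧ P.PairwiseDisjoint fun t => interior t.carrier :=
  and_congr_right' <| forall₂_congr fun _ _ => forall₂_congr fun _ _ =>
    imp_congr_right fun _ => disjoint_iff_inter_eq_empty.symm

theorem IsPartialTiling.translateSet (hP : IsPartialTiling P) (x : Pt d) :
    IsPartialTiling (translateSet P x) := by
  rw [isPartialTiling_iff] at hP ⊢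
  refine ⟨forall_mem_image.2 fun t ht => (hP.1 t ht).translate x, ?_⟩
  rintro _ ⟨s, hs, rfl⟩ _ ⟨t, ht, rfl⟩ hne
  simp only [Function.onFun, Tile.translate_carrier, interior_image_add_right]
  exact (disjoint_image_iff (add_left_injective x)).2
    (hP.2 hs ht (ne_of_apply_ne (Tile.translate · x) hne))

theorem IsPatch.translateSet (hP : IsPatch P) (x : Pt d) : IsPatch (translateSet P x) :=
  ⟨hP.1.translateSet x, hP.2.image _⟩

end PartialTiling

namespace SubstSystem

variable (S : SubstSystem d)

theorem lam_pos : 0 < S.lam := one_pos.trans S.one_lt_lam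

theorem lam_pow_pos (n : ℕ) : 0 < S.lam ^ n := pow_pos S.lam_pos n

theorem lam_pow_ne_zero (n : ℕ) : S.lam ^ n ≠ 0 := (S.lam_pow_pos n).ne'

theorem subSet_translateSet (P : Set (Tile d)) (x : Pt d) :
    S.subSet (translateSet P x) = translateSet (S.subSet P) (S.lam • x) := by
  simp only [subSet, translateSet, biUnion_image, image_iUnion₂, S.sub_translate]

theorem subIter_translateSet (n : ℕ) (P : Set (Tile d)) (x : Pt d) :
    S.subIter n (translateSet P x) = translateSet (S.subIter n P) (S.lam ^ n • x) := by
  induction n generalizing P x with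
  | zero => simp [subIter]
  | succ n ih =>
    rw [subIter, Function.iterate_succ_apply, ← subIter, subSet_translateSet, ih, subIter,
      subIter, Function.iterate_succ_apply, smul_smul, ← pow_succ]

theorem omegan_translate (n : ℕ) (t : Tile d) (x : Pt d) :
    S.omegan n (t.translate x) = translateSet (S.omegan n t) (S.lam ^ n • x) := by
  rw [omegan, omegan, ← subIter_translateSet, translateSet, image_singleton]

theorem omegan_succ (n : ℕ) (t : Tile d) : S.omegan (n + 1) t = S.subSet (S.omegan n t) :=
  Function.iterate_succ_apply' _ n _

theorem subIter_omegan (m n : ℕ) (t : Tile d) :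
    S.subIter m (S.omegan n t) = S.omegan (m + n) t :=
  (Function.iterate_add_apply _ m n _).symm

theorem subSet_iUnion {ι : Sort*} (Q : ι → Set (Tile d)) :
    S.subSet (⋃ i, Q i) = ⋃ i, S.subSet (Q i) :=
  biUnion_iUnion Q S.sub

theorem subIter_iUnion (n : ℕ) {ι : Sort*} (Q : ι → Set (Tile d)) :
    S.subIter n (⋃ i, Q i) = ⋃ i, S.subIter n (Q i) := by
  induction n with
  | zero => rfl
  | succ n ih =>
    simp only [subIter, Function.iterate_succ_apply'] at ih ⊢
    rw [ih, subSet_iUnion]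

theorem subIter_eq_biUnion_omegan (n : ℕ) (P : Set (Tile d)) :
    S.subIter n P = ⋃ u ∈ P, S.omegan n u := by
  conv_lhs => rw [← biUnion_of_singleton P]
  simp only [subIter_iUnion, omegan]

theorem omegan_add (m n : ℕ) (t : Tile d) :
    S.omegan (m + n) t = ⋃ u ∈ S.omegan n t, S.omegan m u := by
  rw [← subIter_omegan, subIter_eq_biUnion_omegan]

theorem omegan_subset_omegan_add {m n : ℕ} {t u : Tile d} (hu : u ∈ S.omegan n t) :
    S.omegan m u ⊆ S.omegan (m + n) t := by
  rw [omegan_add]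
  exact subset_biUnion_of_mem hu

def IsProtoTranslate (t : Tile d) : Prop :=
  ∃ p ∈ S.proto, ∃ x : Pt d, t = p.translate x

theorem exists_diam_le : ∃ D : ℝ, ∀ t, S.IsProtoTranslate t → diam t.carrier ≤ D := by
  obtain ⟨D, hD⟩ := (S.proto_finite.image fun p => diam p.carrier).bddAbove
  refine ⟨D, ?_⟩
  rintro _ ⟨p, hp, w, rfl⟩
  rw [Tile.translate_carrier, (isometry_add_right w).diam_image]
  exact hD (mem_image_of_mem _ hp)

variable {S} {t : Tile d}

theorem isProtoTranslate_of_mem {p : Tile d} (hp : p ∈ S.proto) : S.IsProtoTranslate p :=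
  ⟨p, hp, 0, (Tile.translate_zero p).symm⟩

namespace IsProtoTranslate

theorem translate (ht : S.IsProtoTranslate t) (x : Pt d) :
    S.IsProtoTranslate (t.translate x) := by
  obtain ⟨p, hp, w, rfl⟩ := ht
  exact ⟨p, hp, w + x, Tile.translate_translate p w x⟩

theorem isTile (ht : S.IsProtoTranslate t) : t.IsTile := by
  obtain ⟨p, hp, w, rfl⟩ := ht
  exact (S.proto_isTile p hp).translate w

theorem isCompact (ht : S.IsProtoTranslate t) : IsCompact t.carrier :=
  ht.isTile.isCompact

theorem interior_nonempty (ht : S.IsProtoTranslate t) : (interior t.carrier).Nonempty := by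
  obtain ⟨p, hp, w, rfl⟩ := ht
  rw [Tile.translate_carrier, interior_image_add_right]
  exact ⟨_, mem_image_of_mem _ (S.proto_zero_mem p hp)⟩

theorem isPatch_sub (ht : S.IsProtoTranslate t) : IsPatch (S.sub t) := by
  obtain ⟨p, hp, w, rfl⟩ := ht
  rw [S.sub_translate]
  exact (S.sub_patch p hp).translateSet _

theorem psupp_sub (ht : S.IsProtoTranslate t) : psupp (S.sub t) = S.lam • t.carrier := by
  obtain ⟨p, hp, w, rfl⟩ := ht
  rw [S.sub_translate, ← translateSet, psupp_translateSet, S.sub_supp p hp,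
    Tile.translate_carrier, smul_image_add_right]

theorem of_mem_sub (ht : S.IsProtoTranslate t) {s : Tile d} (hs : s ∈ S.sub t) :
    S.IsProtoTranslate s := by
  obtain ⟨p, hp, w, rfl⟩ := ht
  rw [S.sub_translate] at hs
  obtain ⟨u, hu, rfl⟩ := hs
  obtain ⟨q, hq, y, rfl⟩ := S.sub_proto p hp u hu
  exact ((isProtoTranslate_of_mem hq).translate _).translate _

end IsProtoTranslate

section Patches

variable {P : Set (Tile d)}

theorem isProtoTranslate_of_mem_subSet (hP : ∀ t ∈ P, S.IsProtoTranslate t) {s : Tile d}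
    (hs : s ∈ S.subSet P) : S.IsProtoTranslate s := by
  obtain ⟨t, ht, hs⟩ := mem_iUnion₂.1 hs
  exact (hP t ht).of_mem_sub hs

theorem psupp_subSet (hP : ∀ t ∈ P, S.IsProtoTranslate t) :
    psupp (S.subSet P) = S.lam • psupp P := by
  rw [subSet, psupp_biUnion, psupp, smul_set_iUnion₂]
  exact iUnion₂_congr fun t ht => (hP t ht).psupp_sub

theorem isPatch_subSet (hP : ∀ t ∈ P, S.IsProtoTranslate t) (hPP : IsPatch P) :
    IsPatch (S.subSet P) := by
  refine ⟨isPartialTiling_iff.2 ⟨fun s hs => (isProtoTranslate_of_mem_subSet hP hs).isTile, ?_⟩,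
    hPP.2.biUnion fun t ht => (hP t ht).isPatch_sub.2⟩
  refine PairwiseDisjoint.biUnion ?_ fun t ht =>
    (isPartialTiling_iff.1 (hP t ht).isPatch_sub.1).2
  have hle (t : Tile d) (ht : t ∈ P) :
      ⨆ s ∈ S.sub t, interior s.carrier ≤ S.lam • interior t.carrier :=
    iSup₂_le fun s hs => by
      rw [← interior_smul₀ S.lam_pos.ne', ← (hP t ht).psupp_sub]
      exact interior_mono (subset_psupp hs)
  intro t ht t' ht' hne
  exact ((disjoint_image_iff (smul_right_injective _ S.lam_pos.ne')).2
    ((isPartialTiling_iff.1 hPP.1).2 ht ht' hne)).mono (hle t ht) (hle t' ht')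

end Patches

theorem isProtoTranslate_of_mem_omegan (ht : S.IsProtoTranslate t) {m : ℕ} {s : Tile d}
    (hs : s ∈ S.omegan m t) : S.IsProtoTranslate s := by
  induction m generalizing s with
  | zero => exact (mem_singleton_iff.1 hs) ▸ ht
  | succ m ih => exact isProtoTranslate_of_mem_subSet (fun _ => ih) (S.omegan_succ m t ▸ hs)

theorem psupp_omegan (ht : S.IsProtoTranslate t) (m : ℕ) :
    psupp (S.omegan m t) = S.lam ^ m • t.carrier := by
  induction m with
  | zero => simp [omegan, subIter, psupp]
  | succ m ih =>
    rw [omegan_succ, psupp_subSet (fun _ => isProtoTranslate_of_mem_omegan ht), ih, smul_smul,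
      pow_succ']

theorem isPatch_omegan (ht : S.IsProtoTranslate t) (m : ℕ) : IsPatch (S.omegan m t) := by
  induction m with
  | zero =>
    exact ⟨isPartialTiling_iff.2 ⟨fun s hs => (mem_singleton_iff.1 hs) ▸ ht.isTile,
      pairwiseDisjoint_singleton _ _⟩, finite_singleton t⟩
  | succ m ih =>
    rw [omegan_succ]
    exact isPatch_subSet (fun _ => isProtoTranslate_of_mem_omegan ht) ih

theorem carrier_subset_of_mem_omegan (ht : S.IsProtoTranslate t) {m : ℕ} {s : Tile d}
    (hs : s ∈ S.omegan m t) : s.carrier ⊆ S.lam ^ m • t.carrier :=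
  psupp_omegan ht m ▸ subset_psupp hs

theorem interior_psupp_omegan (ht : S.IsProtoTranslate t) (m : ℕ) :
    interior (psupp (S.omegan m t)) = S.lam ^ m • interior t.carrier := by
  rw [psupp_omegan ht, interior_smul₀ (S.lam_pow_ne_zero m)]

theorem IsProtoTranslate.subset_closure_interior (ht : S.IsProtoTranslate t) :
    t.carrier ⊆ closure (interior t.carrier) := by
  intro z hz
  by_contra hcz
  have hδ : 0 < infDist z (interior t.carrier) := by
    rw [← infDist_closure]
    exact (isClosed_closure.notMem_iff_infDist_pos ht.interior_nonempty.closure).1 hcz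
  set δ := infDist z (interior t.carrier)
  obtain ⟨D, hD⟩ := S.exists_diam_le
  obtain ⟨k, hk⟩ := pow_unbounded_of_one_lt (D / δ) S.one_lt_lam
  -- `λ^k z` lies in a tile `s` of `ω^k(t)`, whose interior points all lie in `λ^k int(t)`,
  -- at distance `≥ λ^k δ > D` from `λ^k z`.
  obtain ⟨s, hs, hzs⟩ := mem_psupp.1 <|
    (psupp_omegan ht k).symm ▸ smul_mem_smul_set (a := S.lam ^ k) hz
  have hsP := isProtoTranslate_of_mem_omegan ht hs
  obtain ⟨u, hu⟩ := hsP.interior_nonempty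
  obtain ⟨v, hv, rfl⟩ : u ∈ S.lam ^ k • interior t.carrier :=
    interior_psupp_omegan ht k ▸ interior_mono (subset_psupp hs) hu
  have : S.lam ^ k * δ ≤ D := calc
    S.lam ^ k * δ ≤ S.lam ^ k * dist z v :=
      mul_le_mul_of_nonneg_left (infDist_le_dist_of_mem hv) (S.lam_pow_pos k).le
    _ = dist (S.lam ^ k • z) (S.lam ^ k • v) := by
      rw [dist_smul₀, Real.norm_of_nonneg (S.lam_pow_pos k).le]
    _ ≤ diam s.carrier := dist_le_diam_of_mem hsP.isCompact.isBounded hzs (interior_subset hu)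
    _ ≤ D := hD s hsP
  rw [div_lt_iff₀ hδ] at hk
  linarith

theorem eq_of_mem_of_mem_interior {P : Set (Tile d)} (hP : IsPartialTiling P) {s : Tile d}
    (hs : s ∈ P) (ht : t ∈ P) (hsP : S.IsProtoTranslate s) {z : Pt d} (hzs : z ∈ s.carrier)
    (hzt : z ∈ interior t.carrier) : s = t := by
  by_contra hne
  obtain ⟨w, hwt, hws⟩ :=
    mem_closure_iff.1 (hsP.subset_closure_interior hzs) _ isOpen_interior hzt
  exact ((isPartialTiling_iff.1 hP).2 hs ht hne).ne_of_mem hws hwt rfl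

theorem IsProtoTranslate.eventually_closedBall_subset_interior (ht : S.IsProtoTranslate t)
    (h0 : (0 : Pt d) ∈ interior t.carrier) (R : ℝ) :
    ∀ᶠ m in atTop, closedBall (0 : Pt d) R ⊆ interior (psupp (S.omegan m t)) := by
  obtain ⟨ρ, hρ, hball⟩ := Metric.isOpen_iff.1 isOpen_interior 0 h0
  filter_upwards [(tendsto_pow_atTop_atTop_of_one_lt S.one_lt_lam).eventually_gt_atTop (R / ρ)]
    with m hm
  rw [interior_psupp_omegan ht]
  calc closedBall (0 : Pt d) R ⊆ ball 0 (S.lam ^ m * ρ) :=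
        closedBall_subset_ball (by rwa [div_lt_iff₀ hρ] at hm)
    _ = S.lam ^ m • ball 0 ρ := by
        rw [_root_.smul_ball (S.lam_pow_ne_zero m), smul_zero,
          Real.norm_of_nonneg (S.lam_pow_pos m).le]
    _ ⊆ S.lam ^ m • interior t.carrier := smul_set_mono hball

theorem Primitive.exists_translate_mem_omegan (hA1 : S.Primitive) :
    ∃ N, ∀ s, S.IsProtoTranslate s → ∀ p ∈ S.proto, ∃ x : Pt d, p.translate x ∈ S.omegan N s := by
  obtain ⟨N, hN⟩ := hA1
  refine ⟨N, ?_⟩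
  rintro _ ⟨q, hq, y, rfl⟩ p hp
  obtain ⟨z, hz⟩ := hN q hq p hp
  refine ⟨z + S.lam ^ N • y, ?_⟩
  rw [omegan_translate]
  exact ⟨_, hz, Tile.translate_translate p z _⟩

theorem exists_mem_omegan_subset_interior (hA1 : S.Primitive) :
    ∃ n : ℕ, 1 ≤ n ∧ ∃ p ∈ S.proto, ∃ x : Pt d,
      p.translate x ∈ S.omegan n p ∧
      (p.translate x).carrier ⊆ interior (psupp (S.omegan n p)) := by
  obtain ⟨N, hN⟩ := hA1.exists_translate_mem_omegan
  obtain ⟨p, hp⟩ := S.proto_nonempty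
  have hpP := isProtoTranslate_of_mem hp
  have h0p := S.proto_zero_mem p hp
  obtain ⟨D, hD⟩ := S.exists_diam_le
  obtain ⟨m, hm, hm1⟩ :=
    ((hpP.eventually_closedBall_subset_interior h0p D).and (eventually_ge_atTop 1)).exists
  obtain ⟨s, hs, h0s⟩ := mem_psupp.1 <|
    (psupp_omegan hpP m).symm ▸ zero_mem_smul_set (interior_subset h0p)
  have hsP := isProtoTranslate_of_mem_omegan hpP hs
  have hs_int : s.carrier ⊆ interior (psupp (S.omegan m p)) := fun v hv =>
    hm (mem_closedBall.2 ((dist_le_diam_of_mem hsP.isCompact.isBounded hv h0s).trans (hD s hsP)))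
  obtain ⟨x, hx⟩ := hN s hsP p hp
  refine ⟨N + m, by omega, p, hp, x, S.omegan_subset_omegan_add hs hx, ?_⟩
  calc (p.translate x).carrier ⊆ S.lam ^ N • s.carrier := carrier_subset_of_mem_omegan hsP hx
    _ ⊆ S.lam ^ N • interior (psupp (S.omegan m p)) := smul_set_mono hs_int
    _ = interior (psupp (S.omegan (N + m) p)) := by
      rw [interior_psupp_omegan hpP, interior_psupp_omegan hpP, smul_smul, pow_add]

section FixedTile

variable {n : ℕ} {x y₀ : Pt d}

theorem IsProtoTranslate.smul_add_mem_psupp_omegan (ht : S.IsProtoTranslate t)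
    (hint : (t.translate x).carrier ⊆ interior (psupp (S.omegan n t))) {y : Pt d}
    (hy : y ∈ psupp (S.omegan n t)) : (S.lam ^ n)⁻¹ • y + x ∈ psupp (S.omegan n t) := by
  rw [psupp_omegan ht] at hy
  obtain ⟨u, hu, rfl⟩ := hy
  rw [inv_smul_smul₀ (S.lam_pow_ne_zero n)]
  exact interior_subset (hint (mem_image_of_mem _ hu))

theorem omegan_translate_sub_of_fixed (hy₀ : (S.lam ^ n)⁻¹ • y₀ + x = y₀) (t : Tile d) :
    S.omegan n (t.translate (x - y₀)) = translateSet (S.omegan n t) (-y₀) := by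
  have h := congrArg (S.lam ^ n • ·) hy₀
  simp only [smul_add, smul_inv_smul₀ (S.lam_pow_ne_zero n)] at h
  rw [omegan_translate, smul_sub, ← h]
  abel_nf

theorem translate_sub_mem_omegan_of_fixed (hy₀ : (S.lam ^ n)⁻¹ • y₀ + x = y₀)
    (hmem : t.translate x ∈ S.omegan n t) :
    t.translate (x - y₀) ∈ S.omegan n (t.translate (x - y₀)) := by
  rw [omegan_translate_sub_of_fixed hy₀]
  exact ⟨_, hmem, by simp only [Tile.translate_translate, sub_eq_add_neg]⟩

theorem IsProtoTranslate.zero_mem_interior_translate_sub_of_fixed (ht : S.IsProtoTranslate t)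
    (hn : 1 ≤ n) (hy₀ : (S.lam ^ n)⁻¹ • y₀ + x = y₀)
    (hint : (t.translate x).carrier ⊆ interior (psupp (S.omegan n t))) :
    (0 : Pt d) ∈ interior (t.translate (x - y₀)).carrier := by
  have ht' := ht.translate (x - y₀)
  refine zero_mem_interior_of_subset_interior_smul ht'.isCompact.isClosed
    (ht'.interior_nonempty.mono interior_subset) (one_lt_pow₀ S.one_lt_lam (by omega : n ≠ 0)) ?_
  rw [← psupp_omegan ht', omegan_translate_sub_of_fixed hy₀, psupp_translateSet,
    interior_image_add_right, sub_eq_add_neg, ← Tile.translate_translate, Tile.translate_carrier]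
  exact image_mono hint

end FixedTile

variable (S) in
def limitTiling (n : ℕ) (t : Tile d) : Set (Tile d) := ⋃ k : ℕ, S.omegan (k * n) t

section LimitTiling

variable {n : ℕ}

theorem monotone_omegan_mul (hself : t ∈ S.omegan n t) :
    Monotone fun k => S.omegan (k * n) t :=
  monotone_nat_of_le_succ fun k => by
    simpa only [Nat.succ_mul] using S.omegan_subset_omegan_add (m := k * n) hself

theorem mem_limitTiling_self : t ∈ S.limitTiling n t :=
  mem_iUnion.2 ⟨0, by simp [omegan, subIter]⟩

theorem isProtoTranslate_of_mem_limitTiling (ht : S.IsProtoTranslate t) {s : Tile d}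
    (hs : s ∈ S.limitTiling n t) : S.IsProtoTranslate s :=
  let ⟨_, hk⟩ := mem_iUnion.1 hs
  isProtoTranslate_of_mem_omegan ht hk

theorem isPartialTiling_limitTiling (ht : S.IsProtoTranslate t) (hself : t ∈ S.omegan n t) :
    IsPartialTiling (S.limitTiling n t) :=
  isPartialTiling_iff.2 ⟨fun _ hs => (isProtoTranslate_of_mem_limitTiling ht hs).isTile,
    (pairwiseDisjoint_iUnion (monotone_omegan_mul hself).directed_le).2 fun k =>
      (isPartialTiling_iff.1 (isPatch_omegan ht (k * n)).1).2⟩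

theorem psupp_limitTiling (ht : S.IsProtoTranslate t) (hn : 1 ≤ n)
    (h0 : (0 : Pt d) ∈ interior t.carrier) : psupp (S.limitTiling n t) = univ := by
  refine eq_univ_of_forall fun z => ?_
  obtain ⟨m, hm⟩ := eventually_atTop.1 (ht.eventually_closedBall_subset_interior h0 ‖z‖)
  obtain ⟨s, hs, hzs⟩ := mem_psupp.1 <| interior_subset <|
    hm (m * n) (Nat.le_mul_of_pos_right m hn) (mem_closedBall_zero_iff.2 le_rfl)
  exact mem_psupp.2 ⟨s, mem_iUnion.2 ⟨m, hs⟩, hzs⟩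

theorem limitTiling_mem_Omega (ht : S.IsProtoTranslate t) (hself : t ∈ S.omegan n t)
    (hn : 1 ≤ n) (h0 : (0 : Pt d) ∈ interior t.carrier) : S.limitTiling n t ∈ S.Omega := by
  refine ⟨⟨isPartialTiling_limitTiling ht hself, psupp_limitTiling ht hn h0⟩, fun P hPT hP => ?_⟩
  obtain ⟨K, hK⟩ :=
    (monotone_omegan_mul hself).directed_le.exists_mem_subset_of_finset_subset_biUnion
      (s := hP.2.toFinset) (by simpa [limitTiling] using hPT)
  obtain ⟨p, hp, w, rfl⟩ := ht
  exact ⟨K * n, p, hp, S.lam ^ (K * n) • w, by simpa [omegan_translate] using hK⟩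

theorem subIter_limitTiling (hself : t ∈ S.omegan n t) :
    S.subIter n (S.limitTiling n t) = S.limitTiling n t := by
  rw [limitTiling, subIter_iUnion, ← (monotone_omegan_mul hself).iUnion_nat_add 1]
  exact iUnion_congr fun k => by rw [subIter_omegan, add_one_mul, add_comm]

theorem setOf_mem_limitTiling_zero_mem (ht : S.IsProtoTranslate t) (hself : t ∈ S.omegan n t)
    (h0 : (0 : Pt d) ∈ interior t.carrier) :
    {s ∈ S.limitTiling n t | (0 : Pt d) ∈ s.carrier} = {t} := by
  ext s
  refine ⟨fun ⟨hs, hzs⟩ => ?_, ?_⟩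
  · exact eq_of_mem_of_mem_interior (isPartialTiling_limitTiling ht hself) hs
      mem_limitTiling_self (isProtoTranslate_of_mem_limitTiling ht hs) hzs h0
  · rintro rfl
    exact ⟨mem_limitTiling_self, interior_subset h0⟩

end LimitTiling

end SubstSystem

theorem stmt11_general {d : ℕ} (S : SubstSystem d) (hA1 : S.Primitive) :
    (∃ n : ℕ, 1 ≤ n ∧ ∃ p ∈ S.proto, ∃ x : Pt d,
      p.translate x ∈ S.omegan n p ∧
      (p.translate x).carrier ⊆ interior (psupp (S.omegan n p))) ∧
    (∀ n : ℕ, 1 ≤ n → ∀ p ∈ S.proto, ∀ x : Pt d,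
      p.translate x ∈ S.omegan n p →
      (p.translate x).carrier ⊆ interior (psupp (S.omegan n p)) →
      ((∀ y ∈ psupp (S.omegan n p), (S.lam ^ n)⁻¹ • y + x ∈ psupp (S.omegan n p)) ∧
       (∃! y₀ : Pt d, (S.lam ^ n)⁻¹ • y₀ + x = y₀) ∧
       (∀ y₀ : Pt d, (S.lam ^ n)⁻¹ • y₀ + x = y₀ →
         p.translate (x - y₀) ∈ S.omegan n (p.translate (x - y₀)) ∧
         (0 : Pt d) ∈ interior (p.translate (x - y₀)).carrier ∧
         (⋃ k : ℕ, S.omegan (k * n) (p.translate (x - y₀))) ∈ S.Omega ∧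
         S.subIter n (⋃ k : ℕ, S.omegan (k * n) (p.translate (x - y₀))) =
           ⋃ k : ℕ, S.omegan (k * n) (p.translate (x - y₀)) ∧
         {t' ∈ ⋃ k : ℕ, S.omegan (k * n) (p.translate (x - y₀)) |
            (0 : Pt d) ∈ t'.carrier} = {p.translate (x - y₀)}))) := by
  refine ⟨SubstSystem.exists_mem_omegan_subset_interior hA1, fun n hn p hp x hmem hint => ?_⟩
  have hpP := SubstSystem.isProtoTranslate_of_mem hp
  have hcontr : (S.lam ^ n)⁻¹ ≠ 1 :=
    (inv_lt_one_of_one_lt₀ (one_lt_pow₀ S.one_lt_lam (by omega : n ≠ 0))).ne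
  refine ⟨fun y hy => hpP.smul_add_mem_psupp_omegan hint hy, existsUnique_smul_add_eq hcontr x,
    fun y₀ hy₀ => ?_⟩
  have ht := hpP.translate (x - y₀)
  have hself := SubstSystem.translate_sub_mem_omegan_of_fixed hy₀ hmem
  have h0 := hpP.zero_mem_interior_translate_sub_of_fixed hn hy₀ hint
  exact ⟨hself, h0, SubstSystem.limitTiling_mem_Omega ht hself hn h0,
    SubstSystem.subIter_limitTiling hself, SubstSystem.setOf_mem_limitTiling_zero_mem ht hself h0⟩

/-- Primitivity yields `n ≥ 1`, `p ∈ 𝒫`, `x` with `p + x ∈ ω^n(p)`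
inside the interior of `supp(ω^n(p))`; for any such data the contraction
`y ↦ λ^{-n}y + x` maps `supp(ω^n(p))` into itself with a unique fixed point `y₀`, and
`t = p + x − y₀` satisfies `t ∈ ω^n(t)`, contains `0` in its interior, and
`T = ∪_k ω^{kn}(t)` is a tiling in `Ω` with `ω^n(T) = T` whose unique tile containing
`0` is `t`. -/
theorem stmt11 {d : ℕ} (hd : 1 ≤ d) (S : SubstSystem d) (hA1 : S.Primitive) :
    (∃ n : ℕ, 1 ≤ n ∧ ∃ p ∈ S.proto, ∃ x : Pt d,
      p.translate x ∈ S.omegan n p ∧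
      (p.translate x).carrier ⊆ interior (psupp (S.omegan n p))) ∧
    (∀ n : ℕ, 1 ≤ n → ∀ p ∈ S.proto, ∀ x : Pt d,
      p.translate x ∈ S.omegan n p →
      (p.translate x).carrier ⊆ interior (psupp (S.omegan n p)) →
      ((∀ y ∈ psupp (S.omegan n p), (S.lam ^ n)⁻¹ • y + x ∈ psupp (S.omegan n p)) ∧
       (∃! y₀ : Pt d, (S.lam ^ n)⁻¹ • y₀ + x = y₀) ∧
       (∀ y₀ : Pt d, (S.lam ^ n)⁻¹ • y₀ + x = y₀ →
         p.translate (x - y₀) ∈ S.omegan n (p.translate (x - y₀)) ∧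
         (0 : Pt d) ∈ interior (p.translate (x - y₀)).carrier ∧
         (⋃ k : ℕ, S.omegan (k * n) (p.translate (x - y₀))) ∈ S.Omega ∧
         S.subIter n (⋃ k : ℕ, S.omegan (k * n) (p.translate (x - y₀))) =
           ⋃ k : ℕ, S.omegan (k * n) (p.translate (x - y₀)) ∧
         {t' ∈ ⋃ k : ℕ, S.omegan (k * n) (p.translate (x - y₀)) |
            (0 : Pt d) ∈ t'.carrier} = {p.translate (x - y₀)}))) :=
  stmt11_general S hA1
end

section
/- Fix n ∈ ℕ and p ∈ 𝒫, and let 𝔡 be the maximum diameter of the prototiles. For every i ≥ 0 and every x ∈ ρ^i(n, p), one has D(x) ≤ (2i + 1)·𝔡; in particular, for any N, if R > (2N + 1)·𝔡 then every x ∈ ρ^i(n, p) with 0 ≤ i ≤ N satisfies D(x) < R. -/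
open Metric Set Pointwise

open Classical in
/-- `t(x)`: the tile of `ω^n(p)` with puncture `x` (chosen). -/
noncomputable def tileOf {d : ℕ} (S : SubstSystem d) (n : ℕ) (p : Tile d) (x : Pt d) : Tile d :=
  if h : ∃ t ∈ S.omegan n p, S.IsPuncture t x then h.choose else default

/-- `rhoCum S n p k = ρ^0(n,p) ∪ ⋯ ∪ ρ^{k−1}(n,p)`: the punctures removed after
peeling off `k` boundary layers from `ω^n(p)`. -/
noncomputable def rhoCum {d : ℕ} (S : SubstSystem d) (n : ℕ) (p : Tile d) : ℕ → Set (Pt d)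
  | 0 => ∅
  | k + 1 => rhoCum S n p k ∪
      {x ∈ S.Punc n p | x ∉ rhoCum S n p k ∧
        ((tileOf S n p x).carrier ∩
          frontier (psupp {t ∈ S.omegan n p |
            ∀ x' : Pt d, S.IsPuncture t x' → x' ∉ rhoCum S n p k})).Nonempty}

/-- The `k`-th boundary layer `ρ^k(n, p)` of punctures of `ω^n(p)`. -/
def rho {d : ℕ} (S : SubstSystem d) (n : ℕ) (p : Tile d) (k : ℕ) : Set (Pt d) :=
  rhoCum S n p (k + 1) \ rhoCum S n p k


namespace Stmt13Aux

variable {d : ℕ}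

lemma translate_translate (t : Tile d) (a b : Pt d) :
    (t.translate a).translate b = t.translate (a + b) := by
  unfold Tile.translate
  simp only [Set.image_image, add_assoc]

lemma translate_zero (t : Tile d) : t.translate 0 = t := by
  cases t with
  | mk c l => simp [Tile.translate]

lemma carrier_translate (t : Tile d) (x : Pt d) :
    (t.translate x).carrier = (fun y => y + x) '' t.carrier := rfl

lemma isCompact_of_isTile {t : Tile d} (h : t.IsTile) : IsCompact t.carrier := by
  obtain ⟨e⟩ := h
  have h1 : CompactSpace (Metric.closedBall (0 : Pt d) 1) :=
    isCompact_iff_compactSpace.mp (isCompact_closedBall _ _)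
  have h2 : CompactSpace t.carrier := e.symm.compactSpace
  exact isCompact_iff_compactSpace.mpr h2

variable (S : SubstSystem d)

lemma omegan_succ (n : ℕ) (p : Tile d) :
    S.omegan (n + 1) p = S.subSet (S.omegan n p) := by
  unfold SubstSystem.omegan SubstSystem.subIter
  exact Function.iterate_succ_apply' _ _ _

lemma omegan_translates (n : ℕ) (p : Tile d) (hp : p ∈ S.proto) :
    ∀ t ∈ S.omegan n p, ∃ q ∈ S.proto, ∃ x : Pt d, t = q.translate x := by
  induction n with
  | zero =>
    intro t ht
    have : t = p := ht
    exact ⟨p, hp, 0, by rw [this, translate_zero]⟩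
  | succ n ih =>
    intro t ht
    rw [omegan_succ] at ht
    rcases Set.mem_iUnion₂.mp ht with ⟨s, hs, hts⟩
    obtain ⟨q, hq, x, rfl⟩ := ih s hs
    rw [S.sub_translate] at hts
    rcases hts with ⟨u, hu, rfl⟩
    obtain ⟨q', hq', x', rfl⟩ := S.sub_proto q hq u hu
    exact ⟨q', hq', x' + S.lam • x, translate_translate q' x' (S.lam • x)⟩

lemma omegan_finite (n : ℕ) (p : Tile d) (hp : p ∈ S.proto) :
    (S.omegan n p).Finite := by
  induction n with
  | zero => exact Set.finite_singleton p
  | succ n ih =>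
    rw [omegan_succ]
    refine Set.Finite.biUnion ih (fun t ht => ?_)
    obtain ⟨q, hq, x, rfl⟩ := omegan_translates S n p hp t ht
    rw [S.sub_translate]
    exact ((S.sub_patch q hq).2).image _

lemma omegan_compact (n : ℕ) (p : Tile d) (hp : p ∈ S.proto) :
    ∀ t ∈ S.omegan n p, IsCompact t.carrier := by
  intro t ht
  obtain ⟨q, hq, x, rfl⟩ := omegan_translates S n p hp t ht
  rw [carrier_translate]
  exact (isCompact_of_isTile (S.proto_isTile q hq)).image (continuous_add_right x)

lemma mem_carrier_of_isPuncture {t : Tile d} {x : Pt d} (h : S.IsPuncture t x) :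
    x ∈ t.carrier := by
  obtain ⟨q, hq, rfl⟩ := h
  exact ⟨0, interior_subset (S.proto_zero_mem q hq), zero_add x⟩

lemma diam_le_of_isPuncture {t : Tile d} {x : Pt d} (𝔡 : ℝ)
    (h𝔡 : ∀ q ∈ S.proto, Metric.diam q.carrier ≤ 𝔡)
    (h : S.IsPuncture t x) : Metric.diam t.carrier ≤ 𝔡 := by
  obtain ⟨q, hq, rfl⟩ := h
  rw [carrier_translate]
  calc Metric.diam ((fun y => y + x) '' q.carrier) = Metric.diam q.carrier :=
      (isometry_add_right x).diam_image q.carrier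
    _ ≤ 𝔡 := h𝔡 q hq

lemma psupp_closed {P : Set (Tile d)} (hfin : P.Finite)
    (hc : ∀ t ∈ P, IsCompact t.carrier) : IsClosed (psupp P) :=
  hfin.isClosed_biUnion (fun t ht => (hc t ht).isClosed)

lemma frontier_peeled (n : ℕ) (p : Tile d) (hp : p ∈ S.proto) (A : Set (Pt d)) :
    frontier (psupp {t ∈ S.omegan n p | ∀ x' : Pt d, S.IsPuncture t x' → x' ∉ A}) ⊆
      frontier (psupp (S.omegan n p)) ∪
      psupp {t ∈ S.omegan n p | ∃ x' : Pt d, S.IsPuncture t x' ∧ x' ∈ A} := by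
  classical
  set K : Set (Tile d) := {t ∈ S.omegan n p | ∀ x' : Pt d, S.IsPuncture t x' → x' ∉ A} with hK
  set Rm : Set (Tile d) := {t ∈ S.omegan n p | ∃ x' : Pt d, S.IsPuncture t x' ∧ x' ∈ A} with hRm
  have hfin : (S.omegan n p).Finite := omegan_finite S n p hp
  have hcomp := omegan_compact S n p hp
  have hsuppcl : IsClosed (psupp (S.omegan n p)) := psupp_closed hfin hcomp
  have hRmcl : IsClosed (psupp Rm) :=
    psupp_closed (hfin.subset (fun t ht => ht.1)) (fun t ht => hcomp t ht.1)
  have hKsub : psupp K ⊆ psupp (S.omegan n p) :=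
    Set.biUnion_subset_biUnion_left (fun t ht => ht.1)
  have hsplit : psupp (S.omegan n p) ⊆ psupp K ∪ psupp Rm := by
    intro z hz
    rcases Set.mem_iUnion₂.mp hz with ⟨t, ht, hzt⟩
    by_cases hcase : ∀ x' : Pt d, S.IsPuncture t x' → x' ∉ A
    · exact Or.inl (Set.mem_iUnion₂.mpr ⟨t, ⟨ht, hcase⟩, hzt⟩)
    · push_neg at hcase
      exact Or.inr (Set.mem_iUnion₂.mpr ⟨t, ⟨ht, hcase⟩, hzt⟩)
  intro y hy
  by_cases hyRm : y ∈ psupp Rm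
  · exact Or.inr hyRm
  left
  have hycl : y ∈ psupp (S.omegan n p) :=
    hsuppcl.closure_subset_iff.mpr hKsub (frontier_subset_closure hy)
  by_contra hynf
  have hyint : y ∈ interior (psupp (S.omegan n p)) := by
    rw [hsuppcl.frontier_eq] at hynf
    simp only [Set.mem_diff, not_and, not_not] at hynf
    exact hynf hycl
  have hU : y ∈ interior (psupp K) := by
    have hopen : IsOpen (interior (psupp (S.omegan n p)) ∩ (psupp Rm)ᶜ) :=
      isOpen_interior.inter hRmcl.isOpen_compl
    have hsub : interior (psupp (S.omegan n p)) ∩ (psupp Rm)ᶜ ⊆ psupp K := by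
      intro z hz
      rcases hsplit (interior_subset hz.1) with h | h
      · exact h
      · exact absurd h hz.2
    exact interior_maximal hsub hopen ⟨hyint, hyRm⟩
  exact hy.2 hU

lemma tileOf_spec (n : ℕ) (p : Tile d) {x : Pt d} (hx : x ∈ S.Punc n p) :
    tileOf S n p x ∈ S.omegan n p ∧ S.IsPuncture (tileOf S n p x) x := by
  have h : ∃ t ∈ S.omegan n p, S.IsPuncture t x := hx
  rw [tileOf, dif_pos h]
  exact h.choose_spec

lemma rhoCum_bound (n : ℕ) (p : Tile d) (hp : p ∈ S.proto)
    (𝔡 : ℝ) (h𝔡 : ∀ q ∈ S.proto, Metric.diam q.carrier ≤ 𝔡) (h0 : 0 ≤ 𝔡) :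
    ∀ k : ℕ, ∀ x ∈ rhoCum S n p k,
      Metric.infDist x (frontier (psupp (S.omegan n p))) ≤ (2 * (k : ℝ) - 1) * 𝔡 := by
  intro k
  induction k with
  | zero => intro x hx; exact absurd hx (Set.notMem_empty x)
  | succ k ih =>
    intro x hx
    push_cast
    have hstep : (2 * (k : ℝ) - 1) * 𝔡 ≤ (2 * ((k : ℝ) + 1) - 1) * 𝔡 := by
      have : (2 * (k : ℝ) - 1) ≤ (2 * ((k : ℝ) + 1) - 1) := by linarith
      exact mul_le_mul_of_nonneg_right this h0
    rcases hx with hx | hx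
    · calc Metric.infDist x (frontier (psupp (S.omegan n p))) ≤ (2 * (k : ℝ) - 1) * 𝔡 :=
          ih x hx
        _ ≤ _ := by push_cast at hstep ⊢; linarith
    · obtain ⟨hxP, hxnot, y, hyT, hyF⟩ := hx
      obtain ⟨htmem, htpunc⟩ := tileOf_spec S n p hxP
      have hxt : x ∈ (tileOf S n p x).carrier := mem_carrier_of_isPuncture S htpunc
      have hdxy : dist x y ≤ 𝔡 := by
        calc dist x y ≤ Metric.diam (tileOf S n p x).carrier :=
            Metric.dist_le_diam_of_mem
              (omegan_compact S n p hp _ htmem).isBounded hxt hyT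
          _ ≤ 𝔡 := diam_le_of_isPuncture S 𝔡 h𝔡 htpunc
      rcases frontier_peeled S n p hp (rhoCum S n p k) hyF with hyf | hyRm
      · calc Metric.infDist x (frontier (psupp (S.omegan n p))) ≤ dist x y :=
            Metric.infDist_le_dist_of_mem hyf
          _ ≤ 𝔡 := hdxy
          _ ≤ (2 * ((k : ℝ) + 1) - 1) * 𝔡 := by
            push_cast
            nlinarith
      · rcases Set.mem_iUnion₂.mp hyRm with ⟨t', ⟨ht'mem, x'', ht'punc, hx''⟩, hyt'⟩
        have hx''t : x'' ∈ t'.carrier := mem_carrier_of_isPuncture S ht'punc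
        have hdyx'' : dist y x'' ≤ 𝔡 :=
          calc dist y x'' ≤ Metric.diam t'.carrier :=
              Metric.dist_le_diam_of_mem
                (omegan_compact S n p hp _ ht'mem).isBounded hyt' hx''t
            _ ≤ 𝔡 := diam_le_of_isPuncture S 𝔡 h𝔡 ht'punc
        have hIH := ih x'' hx''
        calc Metric.infDist x (frontier (psupp (S.omegan n p)))
            ≤ Metric.infDist x'' (frontier (psupp (S.omegan n p))) + dist x x'' :=
              Metric.infDist_le_infDist_add_dist
          _ ≤ (2 * (k : ℝ) - 1) * 𝔡 + (dist x y + dist y x'') := by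
              have := dist_triangle x y x''
              linarith
          _ ≤ (2 * ((k : ℝ) + 1) - 1) * 𝔡 := by
              push_cast
              nlinarith

end Stmt13Aux

/-- If `𝔡` is the maximum diameter of the prototiles, then every
`x ∈ ρ^i(n, p)` satisfies `D(x) ≤ (2i + 1)𝔡`; in particular if `R > (2N + 1)𝔡` then
every `x ∈ ρ^i(n, p)` with `i ≤ N` has `D(x) < R`. -/
theorem stmt13 {d : ℕ} (hd : 1 ≤ d) (S : SubstSystem d)
    (n : ℕ) (p : Tile d) (hp : p ∈ S.proto)
    (𝔡 : ℝ) (h𝔡 : ∀ q ∈ S.proto, Metric.diam q.carrier ≤ 𝔡)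
    (h𝔡max : ∃ q ∈ S.proto, Metric.diam q.carrier = 𝔡) :
    (∀ i : ℕ, ∀ x ∈ rho S n p i,
      Metric.infDist x (frontier (psupp (S.omegan n p))) ≤ (2 * (i : ℝ) + 1) * 𝔡) ∧
    (∀ (N : ℕ) (R : ℝ), (2 * (N : ℝ) + 1) * 𝔡 < R →
      ∀ i : ℕ, i ≤ N → ∀ x ∈ rho S n p i,
        Metric.infDist x (frontier (psupp (S.omegan n p))) < R) := by
  have h0 : 0 ≤ 𝔡 := by
    obtain ⟨q, hq, hqe⟩ := h𝔡max
    rw [← hqe]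
    exact Metric.diam_nonneg
  have key : ∀ i : ℕ, ∀ x ∈ rho S n p i,
      Metric.infDist x (frontier (psupp (S.omegan n p))) ≤ (2 * (i : ℝ) + 1) * 𝔡 := by
    intro i x hx
    have := Stmt13Aux.rhoCum_bound S n p hp 𝔡 h𝔡 h0 (i + 1) x hx.1
    calc Metric.infDist x (frontier (psupp (S.omegan n p)))
        ≤ (2 * ((i : ℕ) + 1 : ℝ) - 1) * 𝔡 := by push_cast at this ⊢; linarith
      _ = (2 * (i : ℝ) + 1) * 𝔡 := by ring
  refine ⟨key, fun N R hR i hi x hx => ?_⟩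
  have h1 : (2 * (i : ℝ) + 1) * 𝔡 ≤ (2 * (N : ℝ) + 1) * 𝔡 := by
    have : (i : ℝ) ≤ (N : ℝ) := Nat.cast_le.mpr hi
    nlinarith
  exact lt_of_le_of_lt ((key i x hx).trans h1) hR
end
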